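/- arXiv:1312.5395 — 6 statements merged into one kernel-verified Lean document; each statement's English description precedes it below -/
import Mathlib

section
/- Let (M, φ, ξ, η, g) be an almost contact metric manifold with ∇_ξ φ = 0. Then g(hX, Y) - g(hY, X) = -(1/2) N^{(2)}(X, Y) for all vector fields X, Y, where N^{(2)}(X,Y) = (L_{φX} η)(Y) - (L_{φY} η)(X). In particular, h is symmetric with respect to g if and only if N^{(2)} vanishes identically. -/
/-- Abstract model of an almost contact manifold: `C` is the ring of smooth
functions, `V` the `C`-module of vector fields, with Lie bracket `bracket`,
the derivation action `act X f = X f`, and the almost contact structure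
`(phi, xi, eta)`. -/
structure AlmostContactStr (C V : Type*) [CommRing C] [Algebra ℝ C]
    [AddCommGroup V] [Module C V] where
  bracket : V → V → V
  act : V → C → C
  phi : V →ₗ[C] V
  xi : V
  eta : V →ₗ[C] C
  bracket_antisymm : ∀ X Y, bracket X Y = - bracket Y X
  bracket_add_left : ∀ X Y Z, bracket (X + Y) Z = bracket X Z + bracket Y Z
  bracket_smul_right : ∀ (c : C) (X Y : V),
    bracket X (c • Y) = c • bracket X Y + act X c • Y
  act_add_left : ∀ X Y c, act (X + Y) c = act X c + act Y c
  act_smul_left : ∀ (a : C) (X : V) (c : C), act (a • X) c = a * act X c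
  act_add : ∀ X a b, act X (a + b) = act X a + act X b
  act_mul : ∀ X a b, act X (a * b) = act X a * b + a * act X b
  phi_phi : ∀ X, phi (phi X) = - X + eta X • xi
  phi_xi : phi xi = 0
  eta_phi : ∀ X, eta (phi X) = 0
  eta_xi : eta xi = 1

/-- An almost contact metric structure together with its Levi-Civita
connection `nabla` (torsion-free and metric). -/
structure ACMetricStr (C V : Type*) [CommRing C] [Algebra ℝ C]
    [AddCommGroup V] [Module C V] extends AlmostContactStr C V where
  g : V →ₗ[C] V →ₗ[C] C
  g_symm : ∀ X Y, g X Y = g Y X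
  g_phi : ∀ X Y, g (phi X) (phi Y) = g X Y - eta X * eta Y
  eta_eq : ∀ X, eta X = g xi X
  nabla : V → V → V
  nabla_add_left : ∀ X Y Z, nabla (X + Y) Z = nabla X Z + nabla Y Z
  nabla_smul_left : ∀ (c : C) (X Y : V), nabla (c • X) Y = c • nabla X Y
  nabla_add_right : ∀ X Y Z, nabla X (Y + Z) = nabla X Y + nabla X Z
  nabla_leibniz : ∀ (c : C) (X Y : V),
    nabla X (c • Y) = c • nabla X Y + act X c • Y
  torsion_free : ∀ X Y, nabla X Y - nabla Y X = bracket X Y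
  metric_compat : ∀ X Y Z, act X (g Y Z) = g (nabla X Y) Z + g Y (nabla X Z)

variable {C V : Type*} [CommRing C] [Algebra ℝ C]
  [AddCommGroup V] [Module C V] [Module ℝ V] [IsScalarTower ℝ C V]

namespace ACMetricStr

variable (A : ACMetricStr C V)

/-- `h = (1/2) L_ξ φ`, i.e. `hX = (1/2)([ξ, φX] - φ[ξ, X])`. -/
noncomputable def hT (X : V) : V :=
  (1/2 : ℝ) • (A.bracket A.xi (A.phi X) - A.phi (A.bracket A.xi X))

/-- `(∇_X φ)Y`. -/
noncomputable def covPhi (X Y : V) : V := A.nabla X (A.phi Y) - A.phi (A.nabla X Y)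

/-- `(∇_X η)(Y)`. -/
noncomputable def covEta (X Y : V) : C := A.act X (A.eta Y) - A.eta (A.nabla X Y)

/-- `dη(X,Y) = (1/2)(X(η Y) - Y(η X) - η [X,Y])`. -/
noncomputable def dEta (X Y : V) : C :=
  (1/2 : ℝ) • (A.act X (A.eta Y) - A.act Y (A.eta X) - A.eta (A.bracket X Y))

/-- `N⁽²⁾(X,Y) = (L_{φX} η)(Y) - (L_{φY} η)(X)`. -/
noncomputable def N2 (X Y : V) : C :=
  (A.act (A.phi X) (A.eta Y) - A.eta (A.bracket (A.phi X) Y))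
    - (A.act (A.phi Y) (A.eta X) - A.eta (A.bracket (A.phi Y) X))

/-- Condition `C₁`:
`(∇_X φ)Y + (∇_{φX} φ)(φY) = 2g(X,Y)ξ - η(Y)X - η(X)η(Y)ξ - η(Y)hX`. -/
noncomputable def C1 : Prop := ∀ X Y : V,
  A.covPhi X Y + A.covPhi (A.phi X) (A.phi Y)
    = ((2 : C) * A.g X Y) • A.xi - A.eta Y • X - (A.eta X * A.eta Y) • A.xi
      - A.eta Y • A.hT X

/-- Condition `C₁'`:
`(∇_X φ)Y + (∇_{φX} φ)(φY) = 2g(X,Y)ξ - 2η(Y)X + η(Y)∇_{φX}ξ`. -/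
noncomputable def C1' : Prop := ∀ X Y : V,
  A.covPhi X Y + A.covPhi (A.phi X) (A.phi Y)
    = ((2 : C) * A.g X Y) • A.xi - ((2 : C) * A.eta Y) • X
      + A.eta Y • A.nabla (A.phi X) A.xi

end ACMetricStr

namespace ACMetricStr

variable (A : ACMetricStr C V)

lemma act_zero' (X : V) : A.act X 0 = 0 := by
  have h2 : A.act X 0 = A.act X 0 + A.act X 0 := by
    simpa using (A.act_add X 0 0).symm
  linear_combination -h2

lemma g_real_smul (r : ℝ) (w Y : V) : A.g (r • w) Y = r • A.g w Y := by
  rw [← algebraMap_smul C r w, map_smul, LinearMap.smul_apply, algebraMap_smul]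

lemma g_phi_xi' (X : V) : A.g (A.phi X) A.xi = 0 := by
  rw [A.g_symm, ← A.eta_eq, A.eta_phi]

lemma g_skew (X Y : V) : A.g X (A.phi Y) = - A.g (A.phi X) Y := by
  have h := A.g_phi X (A.phi Y)
  rw [A.phi_phi, A.eta_phi, map_add, map_neg, map_smul, g_phi_xi'] at h
  simp only [smul_zero, mul_zero, add_zero, sub_zero] at h
  linear_combination -h

lemma eta_nabla (X Y : V) :
    A.eta (A.nabla X Y) = A.act X (A.eta Y) - A.g (A.nabla X A.xi) Y := by
  rw [A.eta_eq, A.eta_eq]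
  linear_combination -A.metric_compat X A.xi Y

lemma hT_eq (h1 : ∀ Y : V, A.covPhi A.xi Y = 0) (X : V) :
    A.hT X = (1/2 : ℝ) • (A.phi (A.nabla X A.xi) - A.nabla (A.phi X) A.xi) := by
  unfold hT
  congr 1
  have hb1 : A.bracket A.xi (A.phi X)
      = A.nabla A.xi (A.phi X) - A.nabla (A.phi X) A.xi := (A.torsion_free _ _).symm
  have hb2 : A.bracket A.xi X = A.nabla A.xi X - A.nabla X A.xi :=
    (A.torsion_free _ _).symm
  have hc : A.nabla A.xi (A.phi X) = A.phi (A.nabla A.xi X) := by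
    have h := h1 X
    unfold covPhi at h
    exact sub_eq_zero.mp h
  rw [hb1, hb2, map_sub, hc]
  abel

lemma L_eta (X Y : V) :
    A.act (A.phi X) (A.eta Y) - A.eta (A.bracket (A.phi X) Y)
      = A.g (A.nabla (A.phi X) A.xi) Y + A.g (A.phi (A.nabla Y A.xi)) X := by
  have e1 := A.eta_nabla (A.phi X) Y
  have e2 : A.eta (A.nabla Y (A.phi X)) = - A.g (A.nabla Y A.xi) (A.phi X) := by
    rw [eta_nabla, A.eta_phi, act_zero']
    ring
  have e3 := A.g_skew (A.nabla Y A.xi) X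
  rw [← A.torsion_free, map_sub, e1, e2, e3]
  ring

lemma N2_eq (X Y : V) :
    A.N2 X Y = (A.g (A.nabla (A.phi X) A.xi) Y + A.g (A.phi (A.nabla Y A.xi)) X)
      - (A.g (A.nabla (A.phi Y) A.xi) X + A.g (A.phi (A.nabla X A.xi)) Y) := by
  unfold N2
  rw [L_eta, L_eta]

lemma gh (h1 : ∀ Y : V, A.covPhi A.xi Y = 0) (X Y : V) :
    A.g (A.hT X) Y
      = (1/2 : ℝ) • (A.g (A.phi (A.nabla X A.xi)) Y - A.g (A.nabla (A.phi X) A.xi) Y) := by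
  rw [hT_eq A h1 X, g_real_smul, map_sub, LinearMap.sub_apply]

end ACMetricStr

/-- If `∇_ξ φ = 0`, then `g(hX,Y) - g(hY,X) = -(1/2) N⁽²⁾(X,Y)`; in
particular, `h` is symmetric with respect to `g` iff `N⁽²⁾` vanishes. -/
theorem hT_symm_iff_N2 (A : ACMetricStr C V)
    (h1 : ∀ Y : V, A.covPhi A.xi Y = 0) :
    (∀ X Y : V, A.g (A.hT X) Y - A.g (A.hT Y) X = -((1/2 : ℝ) • A.N2 X Y)) ∧
      ((∀ X Y : V, A.g (A.hT X) Y = A.g X (A.hT Y)) ↔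
        (∀ X Y : V, A.N2 X Y = 0)) := by
  have key : ∀ X Y : V,
      A.g (A.hT X) Y - A.g (A.hT Y) X = -((1/2 : ℝ) • A.N2 X Y) := by
    intro X Y
    rw [A.gh h1 X Y, A.gh h1 Y X, A.N2_eq]
    simp only [smul_sub, smul_add]
    abel
  refine ⟨key, ?_, ?_⟩
  · intro hs X Y
    have h0 : A.g (A.hT X) Y - A.g (A.hT Y) X = 0 := by
      rw [hs X Y, A.g_symm (A.hT Y) X, sub_self]
    have h2 : (1/2 : ℝ) • A.N2 X Y = 0 := by
      have h3 := (key X Y).symm.trans h0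
      exact neg_eq_zero.mp h3
    calc A.N2 X Y = (2 : ℝ) • ((1/2 : ℝ) • A.N2 X Y) := by
          rw [smul_smul]; norm_num
      _ = 0 := by rw [h2, smul_zero]
  · intro hz X Y
    have h3 := key X Y
    rw [hz X Y, smul_zero, neg_zero] at h3
    rw [A.g_symm X (A.hT Y)]
    exact sub_eq_zero.mp h3
end

section
/- Let (M, φ, ξ, η, g) be an almost contact metric manifold satisfying (∇_X φ)Y + (∇_{φX} φ)(φY) = 2g(X,Y)ξ - η(Y)X - η(X)η(Y)ξ - η(Y)hX for all X, Y (condition C₁). Then ∇_ξ φ = 0. -/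
variable {C V : Type*} [CommRing C] [Algebra ℝ C]
  [AddCommGroup V] [Module C V] [Module ℝ V] [IsScalarTower ℝ C V]

/-- Condition `C₁` implies `∇_ξ φ = 0`. -/
theorem covPhi_xi_eq_zero_of_C1 (A : ACMetricStr C V) (hC1 : A.C1) :
    ∀ Y : V, A.covPhi A.xi Y = 0 := by
  -- basic auxiliary facts
  have act_zero : ∀ X : V, A.act X 0 = 0 := by
    intro X
    have := A.act_add X 0 0
    simpa using this.symm
  have nabla_zero_left : ∀ Y : V, A.nabla 0 Y = 0 := by
    intro Y
    have := A.nabla_smul_left (0 : C) 0 Y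
    simpa using this
  have bracket_zero_right : ∀ X : V, A.bracket X 0 = 0 := by
    intro X
    have := A.bracket_smul_right (0 : C) X 0
    simpa [act_zero] using this
  have bracket_self : A.bracket A.xi A.xi = 0 := by
    have h2 : A.bracket A.xi A.xi + A.bracket A.xi A.xi = 0 := by
      have := A.bracket_antisymm A.xi A.xi
      linear_combination (norm := abel) this
    have : (2 : ℝ) • A.bracket A.xi A.xi = 0 := by
      rw [two_smul]; exact h2
    calc A.bracket A.xi A.xi
        = (1/2 : ℝ) • ((2 : ℝ) • A.bracket A.xi A.xi) := by
          rw [smul_smul]; norm_num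
      _ = 0 := by rw [this, smul_zero]
  have h_xi : A.hT A.xi = 0 := by
    unfold ACMetricStr.hT
    rw [A.toAlmostContactStr.phi_xi, bracket_zero_right, bracket_self]
    simp
  intro Y
  have key := hC1 A.xi Y
  have hcp0 : A.covPhi (A.phi A.xi) (A.phi Y) = 0 := by
    unfold ACMetricStr.covPhi
    rw [A.toAlmostContactStr.phi_xi, nabla_zero_left, nabla_zero_left]
    simp
  rw [hcp0, add_zero, h_xi, smul_zero, sub_zero,
    A.toAlmostContactStr.eta_xi, one_mul] at key
  have hg : A.g A.xi Y = A.eta Y := by rw [(A.eta_eq Y)]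
  rw [hg, two_mul, add_smul] at key
  rw [key]
  abel
end

section
/- Let (M, φ, ξ, η, g) be an almost contact metric manifold satisfying condition C₁: (∇_X φ)Y + (∇_{φX} φ)(φY) = 2g(X,Y)ξ - η(Y)X - η(X)η(Y)ξ - η(Y)hX for all X, Y. Then ∇_ξ ξ = 0. -/
variable {C V : Type*} [CommRing C] [Algebra ℝ C]
  [AddCommGroup V] [Module C V] [Module ℝ V] [IsScalarTower ℝ C V]

/-! The identity `C₁` at `X = Y = ξ` collapses to `φ(∇_ξ ξ) = 0`, since `φξ = 0`, `hξ = 0`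
and `g(ξ, ξ) = 1`. Differentiating `g(ξ, ξ) = 1` gives `η(∇_ξ ξ) = 0`, and a vector
field killed by both `φ` and `η` vanishes because `φ² = -1 + η ⊗ ξ`. -/

namespace AlmostContactStr

variable (A : AlmostContactStr C V)

omit [Module ℝ V] [IsScalarTower ℝ C V] in
theorem act_zero (X : V) : A.act X 0 = 0 := by
  simpa using A.act_add X 0 0

omit [Module ℝ V] [IsScalarTower ℝ C V] in
theorem act_one (X : V) : A.act X 1 = 0 := by
  simpa using A.act_mul X 1 1

omit [Module ℝ V] [IsScalarTower ℝ C V] in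
theorem bracket_zero_right (X : V) : A.bracket X 0 = 0 := by
  simpa [A.act_zero] using A.bracket_smul_right 0 X X

omit [Module ℝ V] [IsScalarTower ℝ C V] in
theorem eq_zero_of_phi_eq_zero_of_eta_eq_zero {X : V} (hphi : A.phi X = 0)
    (heta : A.eta X = 0) : X = 0 := by
  simpa [hphi, heta] using A.phi_phi X

end AlmostContactStr

namespace ACMetricStr

variable (A : ACMetricStr C V)

omit [Module ℝ V] [IsScalarTower ℝ C V] in
theorem nabla_zero_left (Y : V) : A.nabla 0 Y = 0 := by
  simpa using A.nabla_smul_left 0 0 Y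

omit [Module ℝ V] [IsScalarTower ℝ C V] in
theorem nabla_zero_right (X : V) : A.nabla X 0 = 0 := by
  simpa [A.act_zero] using A.nabla_leibniz 0 X X

omit [Module ℝ V] [IsScalarTower ℝ C V] in
theorem bracket_self (X : V) : A.bracket X X = 0 := by
  simpa using (A.torsion_free X X).symm

omit [IsScalarTower ℝ C V] in
theorem hT_xi : A.hT A.xi = 0 := by
  simp [hT, A.phi_xi, A.bracket_zero_right, A.bracket_self]

omit [Module ℝ V] [IsScalarTower ℝ C V] in
theorem covPhi_zero_left (Y : V) : A.covPhi 0 Y = 0 := by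
  simp [covPhi, A.nabla_zero_left]

omit [Module ℝ V] [IsScalarTower ℝ C V] in
theorem covPhi_xi_xi : A.covPhi A.xi A.xi = -A.phi (A.nabla A.xi A.xi) := by
  simp [covPhi, A.phi_xi, A.nabla_zero_right]

omit [Module ℝ V] [IsScalarTower ℝ C V] in
theorem g_xi_xi : A.g A.xi A.xi = 1 := by
  rw [← A.eta_eq, A.eta_xi]

omit [Module ℝ V] [IsScalarTower ℝ C V] in
theorem eta_nabla_xi (X : V) : A.eta (A.nabla X A.xi) = 0 := by
  have h : (2 : ℝ) • A.eta (A.nabla X A.xi) = 0 := by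
    have := A.metric_compat X A.xi A.xi
    rw [A.g_xi_xi, A.act_one, A.g_symm (A.nabla X A.xi), ← A.eta_eq] at this
    rw [two_smul, this]
  exact (smul_eq_zero.mp h).resolve_left two_ne_zero

omit [IsScalarTower ℝ C V] in
theorem phi_nabla_xi_xi_eq_zero_of_C1 (hC1 : A.C1) :
    A.phi (A.nabla A.xi A.xi) = 0 := by
  have h := hC1 A.xi A.xi
  rw [A.covPhi_xi_xi, A.phi_xi, A.covPhi_zero_left, A.eta_xi, A.g_xi_xi, A.hT_xi] at h
  have h' : -A.phi (A.nabla A.xi A.xi) = 0 := by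
    rw [add_zero] at h
    rw [h]
    module
  exact neg_eq_zero.mp h'

end ACMetricStr

/-- Condition `C₁` implies `∇_ξ ξ = 0`. -/
theorem nabla_xi_xi_eq_zero_of_C1 (A : ACMetricStr C V) (hC1 : A.C1) :
    A.nabla A.xi A.xi = 0 :=
  A.eq_zero_of_phi_eq_zero_of_eta_eq_zero (A.phi_nabla_xi_xi_eq_zero_of_C1 hC1)
    (A.eta_nabla_xi A.xi)
end

section
/- Let (M, φ, ξ, η, g) be an almost contact metric manifold satisfying condition C₁ together with the assumption that h is symmetric with respect to g. Then dη(X,Y) = g(X, φY) for all vector fields X, Y; that is, M is a contact metric manifold. -/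
variable {C V : Type*} [CommRing C] [Algebra ℝ C]
  [AddCommGroup V] [Module C V] [Module ℝ V] [IsScalarTower ℝ C V]

section Aux

variable (A : ACMetricStr C V)

lemma half_two {M : Type*} [AddCommGroup M] [Module ℝ M] (x : M) :
    (1/2 : ℝ) • (x + x) = x := by
  rw [← two_smul ℝ x, smul_smul]; norm_num

lemma aux_act_zero (X : V) : A.act X 0 = 0 := by
  have := A.act_add X 0 0
  simpa using this.symm

lemma aux_act_one (X : V) : A.act X 1 = 0 := by
  have := A.act_mul X 1 1
  simp only [mul_one, one_mul] at this
  exact (left_eq_add.mp this)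

lemma aux_act_neg_one (X : V) : A.act X (-1) = 0 := by
  have := A.act_add X 1 (-1)
  rw [add_neg_cancel, aux_act_zero, aux_act_one, zero_add] at this
  exact this.symm

lemma aux_nabla_zero (X : V) : A.nabla X 0 = 0 := by
  have := A.nabla_leibniz 0 X 0
  simpa [aux_act_zero] using this

lemma aux_bracket_self (X : V) : A.bracket X X = 0 := by
  have h := A.bracket_antisymm X X
  have h2 : A.bracket X X + A.bracket X X = 0 := by
    nth_rewrite 1 [h]; abel
  calc A.bracket X X = (1/2 : ℝ) • (A.bracket X X + A.bracket X X) :=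
        (half_two _).symm
    _ = 0 := by rw [h2, smul_zero]

lemma aux_bracket_zero (X : V) : A.bracket X 0 = 0 := by
  have := A.bracket_smul_right 0 X 0
  simpa [aux_act_zero] using this

lemma aux_bracket_add_right (X Y Z : V) :
    A.bracket X (Y + Z) = A.bracket X Y + A.bracket X Z := by
  rw [A.bracket_antisymm, A.bracket_add_left, A.bracket_antisymm Y X,
    A.bracket_antisymm Z X]
  abel

lemma aux_bracket_neg_right (X Y : V) : A.bracket X (-Y) = -A.bracket X Y := by
  have h : (-Y) = (-1 : C) • Y := by simp
  rw [h, A.bracket_smul_right, aux_act_neg_one, zero_smul, add_zero, neg_one_smul]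

lemma phi_rsmul (r : ℝ) (v : V) : A.phi (r • v) = r • A.phi v := by
  rw [← algebraMap_smul C r v, map_smul, algebraMap_smul]

lemma aux_g_xi_xi : A.g A.xi A.xi = 1 := by
  rw [← A.eta_eq]; exact A.eta_xi

lemma aux_g_xi_nabla (X : V) : A.g A.xi (A.nabla X A.xi) = 0 := by
  have hm := A.metric_compat X A.xi A.xi
  rw [aux_g_xi_xi, aux_act_one, A.g_symm (A.nabla X A.xi) A.xi] at hm
  have := half_two (A.g A.xi (A.nabla X A.xi))
  rw [← hm, smul_zero] at this
  exact this.symm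

lemma aux_eta_nabla_xi (X : V) : A.eta (A.nabla X A.xi) = 0 := by
  rw [A.eta_eq]; exact aux_g_xi_nabla A X

lemma aux_g_skew (X Y : V) : A.g (A.phi X) Y = -(A.g X (A.phi Y)) := by
  have h := A.g_phi X (A.phi Y)
  rw [A.eta_phi, mul_zero, sub_zero, A.phi_phi Y, map_add, map_neg, map_smul] at h
  have h0 : A.g (A.phi X) A.xi = 0 := by
    rw [A.g_symm, ← A.eta_eq, A.eta_phi]
  rw [h0, smul_zero, add_zero] at h
  rw [← h, neg_neg]

lemma nabla_xi_eq (hC1 : A.C1) (X : V) :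
    A.nabla X A.xi = -(A.phi X) - A.phi (A.hT X) := by
  have h := hC1 X A.xi
  simp only [ACMetricStr.covPhi, A.phi_xi, map_zero, aux_nabla_zero, zero_sub,
    A.eta_xi, one_smul, mul_one] at h
  have hgx : A.g X A.xi = A.eta X := by rw [A.g_symm, ← A.eta_eq]
  rw [hgx, neg_zero, add_zero, two_mul, add_smul] at h
  have h2 : A.phi (A.nabla X A.xi) = X + A.hT X - A.eta X • A.xi := by
    rw [neg_eq_iff_eq_neg] at h
    rw [h]; abel
  have h3 := congrArg A.phi h2
  rw [A.phi_phi, aux_eta_nabla_xi, zero_smul, add_zero, map_sub, map_add,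
    map_smul, A.phi_xi, smul_zero, sub_zero] at h3
  have := congrArg (fun v => -v) h3
  simp only [neg_neg] at this
  rw [this]; abel

lemma aux_hT_xi : A.hT A.xi = 0 := by
  unfold ACMetricStr.hT
  rw [A.phi_xi, aux_bracket_zero, aux_bracket_self, map_zero, sub_zero, smul_zero]

lemma aux_nabla_xi_xi (hC1 : A.C1) : A.nabla A.xi A.xi = 0 := by
  rw [nabla_xi_eq A hC1, aux_hT_xi, A.phi_xi, map_zero]
  abel

lemma aux_eta_bracket (hC1 : A.C1) (X : V) :
    A.eta (A.bracket A.xi X) = A.act A.xi (A.eta X) := by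
  rw [← A.torsion_free, map_sub, aux_eta_nabla_xi, sub_zero]
  rw [A.eta_eq X, A.metric_compat A.xi A.xi X, aux_nabla_xi_xi A hC1,
    map_zero, LinearMap.zero_apply, zero_add, ← A.eta_eq]

lemma phih (hC1 : A.C1) (X : V) :
    A.phi (A.hT X) + A.hT (A.phi X) = 0 := by
  unfold ACMetricStr.hT
  rw [phi_rsmul, ← smul_add]
  have e1 : A.bracket A.xi (A.phi (A.phi X))
      = -A.bracket A.xi X + A.act A.xi (A.eta X) • A.xi := by
    rw [A.phi_phi X, aux_bracket_add_right, aux_bracket_neg_right,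
      A.bracket_smul_right, aux_bracket_self, smul_zero, zero_add]
  have e2 : A.phi (A.phi (A.bracket A.xi X))
      = -A.bracket A.xi X + A.eta (A.bracket A.xi X) • A.xi := A.phi_phi _
  have inner : A.phi (A.bracket A.xi (A.phi X) - A.phi (A.bracket A.xi X))
      + (A.bracket A.xi (A.phi (A.phi X)) - A.phi (A.bracket A.xi (A.phi X))) = 0 := by
    rw [map_sub, e1, e2, aux_eta_bracket A hC1]
    abel
  rw [inner, smul_zero]

lemma aux_hphi (hC1 : A.C1) (X : V) :
    A.hT (A.phi X) = -(A.phi (A.hT X)) := by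
  have h := phih A hC1 X
  rw [add_comm] at h
  exact add_eq_zero_iff_eq_neg.mp h

end Aux

/-- If `C₁` holds and `h` is symmetric with respect to `g`, then
`dη(X,Y) = g(X, φY)`, i.e. `M` is a contact metric manifold. -/
theorem contact_metric_of_C1_hSymm (A : ACMetricStr C V) (hC1 : A.C1)
    (hsymm : ∀ X Y : V, A.g (A.hT X) Y = A.g X (A.hT Y)) :
    ∀ X Y : V, A.dEta X Y = A.g X (A.phi Y) := by
  intro X Y
  have hA : A.g (A.nabla X A.xi) Y = A.g X (A.phi Y) - A.g X (A.phi (A.hT Y)) := by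
    rw [nabla_xi_eq A hC1 X, map_sub, map_neg, LinearMap.sub_apply,
      LinearMap.neg_apply, aux_g_skew A X Y, aux_g_skew A (A.hT X) Y,
      hsymm X (A.phi Y), aux_hphi A hC1 Y, map_neg]
    ring
  have hB : A.g (A.nabla Y A.xi) X = -(A.g X (A.phi Y)) - A.g X (A.phi (A.hT Y)) := by
    rw [nabla_xi_eq A hC1 Y, map_sub, map_neg, LinearMap.sub_apply,
      LinearMap.neg_apply, A.g_symm (A.phi Y) X, A.g_symm (A.phi (A.hT Y)) X]
  have key : A.act X (A.eta Y) - A.act Y (A.eta X) - A.eta (A.bracket X Y)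
      = A.g X (A.phi Y) + A.g X (A.phi Y) := by
    rw [A.eta_eq Y, A.eta_eq X, A.eta_eq (A.bracket X Y),
      A.metric_compat X A.xi Y, A.metric_compat Y A.xi X,
      ← A.torsion_free, map_sub, hA, hB]
    ring
  unfold ACMetricStr.dEta
  rw [key, half_two]
end

section
/- Let (M, φ, ξ, η, g) be an almost contact metric manifold satisfying condition C₁ and such that ∇_ξ φ = 0. Then ∇_{φX}ξ + φ∇_X ξ = 2X - 2η(X)ξ for all vector fields X. -/
variable {C V : Type*} [CommRing C] [Algebra ℝ C]
  [AddCommGroup V] [Module C V] [Module ℝ V] [IsScalarTower ℝ C V]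

/-- Under `C₁` (using `∇_ξ φ = 0` to express `h`), one has
`∇_{φX}ξ + φ∇_X ξ = 2X - 2η(X)ξ`. -/
theorem nabla_phi_xi_eq (A : ACMetricStr C V) (hC1 : A.C1)
    (h1 : ∀ Y : V, A.covPhi A.xi Y = 0) :
    ∀ X : V,
      A.nabla (A.phi X) A.xi + A.phi (A.nabla X A.xi)
        = (2 : C) • X - ((2 : C) * A.eta X) • A.xi := by
  intro X
  have hzero : ∀ Z : V, A.nabla Z (0 : V) = 0 := by
    intro Z
    have h := A.nabla_add_right Z 0 0
    rw [add_zero] at h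
    exact add_eq_left.mp h.symm
  have hc : A.nabla A.xi (A.phi X) = A.phi (A.nabla A.xi X) := by
    have := h1 X
    unfold ACMetricStr.covPhi at this
    exact sub_eq_zero.mp this
  have hx : A.hT X
      = (1/2 : ℝ) • (A.phi (A.nabla X A.xi) - A.nabla (A.phi X) A.xi) := by
    unfold ACMetricStr.hT
    rw [← A.torsion_free, ← A.torsion_free, map_sub, hc]
    congr 1
    abel
  have gx : A.g X A.xi = A.eta X := by rw [A.g_symm, ← A.eta_eq]
  have key := hC1 X A.xi
  unfold ACMetricStr.covPhi at key
  rw [A.phi_xi] at key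
  simp only [map_zero, hzero, A.eta_xi, mul_one, one_smul, gx, sub_zero,
    zero_sub, add_zero, hx] at key
  have key2 : (1/2 : ℝ) • (A.phi (A.nabla X A.xi) - A.nabla (A.phi X) A.xi)
      = ((2 : C) * A.eta X) • A.xi - X - A.eta X • A.xi
        + A.phi (A.nabla X A.xi) := by
    linear_combination (norm := module) key
  have key3 : A.phi (A.nabla X A.xi) - A.nabla (A.phi X) A.xi
      = (((2 : C) * A.eta X) • A.xi - X - A.eta X • A.xi
          + A.phi (A.nabla X A.xi))
        + (((2 : C) * A.eta X) • A.xi - X - A.eta X • A.xi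
          + A.phi (A.nabla X A.xi)) := by
    rw [← key2, ← two_smul ℝ, smul_smul]
    norm_num
  linear_combination (norm := module) (-1 : C) • key3
end

section
/- Let (M, φ, ξ, η, g) be an almost contact metric manifold. The associated almost Hermitian manifold (M × ℝ, J̄, ḡ), with J̄X = φX - η(X)∂/∂t, J̄(∂/∂t) = ξ and ḡ = e^{-2t}(g + dt²), is Kähler if and only if (∇_X φ)Y = g(X,Y)ξ - η(Y)X and ∇_X ξ = -φX for all vector fields X, Y on M (i.e. M is Sasakian). -/
variable {C V : Type*} [CommRing C] [Algebra ℝ C]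
  [AddCommGroup V] [Module C V] [Module ℝ V] [IsScalarTower ℝ C V]

namespace ACMetricStr

/-- The almost complex structure `J̄` on `M × ℝ`, acting on fields
`X + f ∂/∂t` represented as pairs `(X, f)`:
`J̄X = φX - η(X)∂/∂t`, `J̄(∂/∂t) = ξ`. -/
noncomputable def Jbar (A : ACMetricStr C V) (U : V × C) : V × C :=
  (A.phi U.1 + U.2 • A.xi, - A.eta U.1)

/-- The metric `ḡ = e^{-2t}(g + dt²)` on `M × ℝ`, as a function of `t`. -/
noncomputable def Gbar (A : ACMetricStr C V) (U W : V × C) : ℝ → C :=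
  fun t => Real.exp (-2 * t) • (A.g U.1 W.1 + U.2 * W.2)

/-- The Levi-Civita connection `∇̄` of `ḡ` on fields `X + f ∂/∂t`,
given by `∇̄_X Y = ∇_X Y + g(X,Y)∂/∂t`, `∇̄_X ∂/∂t = -X`,
`∇̄_{∂/∂t} X = -X`, `∇̄_{∂/∂t} ∂/∂t = -∂/∂t`. -/
noncomputable def nbBar (A : ACMetricStr C V) (U W : V × C) : V × C :=
  (A.nabla U.1 W.1 - W.2 • U.1 - U.2 • W.1,
    A.g U.1 W.1 + A.act U.1 W.2 - U.2 * W.2)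

end ACMetricStr

/-- `(M × ℝ, J̄, ḡ)` is Kähler (`∇̄ J̄ = 0`) iff
`(∇_X φ)Y = g(X,Y)ξ - η(Y)X` and `∇_X ξ = -φX`, i.e. `M` is Sasakian. -/
theorem kaehler_iff_sasakian (A : ACMetricStr C V) :
    (∀ U W : V × C, A.nbBar U (A.Jbar W) = A.Jbar (A.nbBar U W)) ↔
      ((∀ X Y : V, A.covPhi X Y = A.g X Y • A.xi - A.eta Y • X) ∧
        (∀ X : V, A.nabla X A.xi = - A.phi X)) := by
  classical
  -- basic facts
  have act_zero : ∀ X : V, A.act X 0 = 0 := by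
    intro X
    have h := A.act_add X 0 0
    rw [add_zero] at h
    linear_combination -h
  have act_one : ∀ X : V, A.act X 1 = 0 := by
    intro X
    have h := A.act_mul X 1 1
    rw [one_mul, mul_one, one_mul] at h
    linear_combination -h
  have nabla_zero : ∀ X : V, A.nabla X 0 = 0 := by
    intro X
    have h := A.nabla_leibniz 0 X 0
    rw [zero_smul, zero_smul, act_zero, zero_smul, add_zero] at h
    exact h
  have g_xi_phi : ∀ X : V, A.g (A.phi X) A.xi = 0 := by
    intro X
    rw [A.g_symm, ← A.eta_eq, A.eta_phi]
  have g_skew : ∀ X Y : V, A.g X (A.phi Y) = - A.g (A.phi X) Y := by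
    intro X Y
    have h := A.g_phi X (A.phi Y)
    rw [A.eta_phi, mul_zero, sub_zero, A.phi_phi] at h
    rw [← h]
    simp only [map_add, map_neg, map_smul, LinearMap.add_apply, LinearMap.neg_apply,
      LinearMap.smul_apply, smul_eq_mul]
    rw [g_xi_phi]
    ring
  have eta_nabla : ∀ X Y : V,
      A.eta (A.nabla X Y) = A.act X (A.eta Y) - A.g X (A.phi Y) - A.g (A.nabla X A.xi + A.phi X) Y := by
    intro X Y
    have h := A.metric_compat X A.xi Y
    rw [← A.eta_eq, ← A.eta_eq] at h
    have : A.g (A.nabla X A.xi) Y = A.g (A.nabla X A.xi + A.phi X) Y - A.g (A.phi X) Y := by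
      rw [map_add, LinearMap.add_apply]; ring
    rw [this] at h
    rw [g_skew]
    linear_combination -h
  constructor
  · intro h
    have key : ∀ X Y : V,
        A.nabla X (A.phi Y) + A.eta Y • X = A.phi (A.nabla X Y) + A.g X Y • A.xi ∧
        True := by
      intro X Y
      refine ⟨?_, trivial⟩
      have h1 := h (X, 0) (Y, 0)
      simp only [ACMetricStr.Jbar, ACMetricStr.nbBar, zero_smul, add_zero, sub_zero,
        mul_zero, zero_mul, map_zero, act_zero, Prod.mk.injEq] at h1
      obtain ⟨h1a, _⟩ := h1
      have : - A.eta Y • X = A.eta Y • X - (2 : C) • (A.eta Y • X) := by module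
      calc A.nabla X (A.phi Y) + A.eta Y • X
          = A.nabla X (A.phi Y) - (- A.eta Y) • X + A.eta Y • X - A.eta Y • X := by module
        _ = A.phi (A.nabla X Y) + A.g X Y • A.xi := by rw [h1a]; module
    have hxi : ∀ X : V, A.nabla X A.xi = - A.phi X := by
      intro X
      have h2 := h (X, 0) ((0 : V), (1 : C))
      simp only [ACMetricStr.Jbar, ACMetricStr.nbBar, zero_smul, one_smul, add_zero,
        zero_add, sub_zero, mul_zero, zero_mul, mul_one, map_zero, act_zero, act_one,
        nabla_zero, neg_zero, zero_sub, map_neg, sub_zero, Prod.mk.injEq] at h2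
      exact h2.1
    refine ⟨?_, hxi⟩
    intro X Y
    have := (key X Y).1
    unfold ACMetricStr.covPhi
    rw [sub_eq_iff_eq_add]
    calc A.nabla X (A.phi Y) = A.nabla X (A.phi Y) + A.eta Y • X - A.eta Y • X := by module
      _ = A.g X Y • A.xi - A.eta Y • X + A.phi (A.nabla X Y) := by rw [this]; module
  · rintro ⟨hphi, hxi⟩
    intro U W
    obtain ⟨X, a⟩ := U
    obtain ⟨Y, b⟩ := W
    have hphi' : A.nabla X (A.phi Y) = A.phi (A.nabla X Y) + A.g X Y • A.xi - A.eta Y • X := by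
      have := hphi X Y
      unfold ACMetricStr.covPhi at this
      rw [sub_eq_iff_eq_add] at this
      rw [this]; module
    simp only [ACMetricStr.Jbar, ACMetricStr.nbBar, Prod.mk.injEq]
    constructor
    · rw [A.nabla_add_right, A.nabla_leibniz, hphi', hxi X]
      simp only [map_sub, map_smul, map_add, smul_add, A.phi_xi, smul_zero, add_zero]
      module
    · simp only [map_add, map_smul, LinearMap.add_apply, LinearMap.smul_apply, smul_eq_mul]
      rw [show A.act X (-A.eta Y) = - A.act X (A.eta Y) by
        have := A.act_add X (A.eta Y) (- A.eta Y)
        rw [add_neg_cancel, act_zero] at this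
        linear_combination -this]
      rw [show A.eta (A.nabla X Y - b • X - a • Y)
            = A.eta (A.nabla X Y) - b * A.eta X - a * A.eta Y by
        simp only [map_sub, map_smul, smul_eq_mul]]
      rw [eta_nabla X Y, hxi X]
      simp only [neg_add_cancel, map_zero, LinearMap.zero_apply]
      rw [A.g_symm X A.xi, ← A.eta_eq]
      ring
end
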